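/- Let (X,d) be a δ-hyperbolic metric space (δ ≥ 0) and let d be a natural number with d ≥ 32δ + 20. Suppose w, x₀, y₀, y₀' ∈ X satisfy: d(w, y₀) ≤ d/2 + 2δ + 1, d(w, x₀) ≤ d(x₀, y₀), d(x₀, y₀') + d(y₀', y₀) = d(x₀, y₀) (y₀' lies on a geodesic from x₀ to y₀), and d(y₀', y₀) = ⌊d/4⌋. Then d(w, y₀') ≤ d/2. -/
import Mathlib


/-- A metric space is δ-hyperbolic if for all `x,y,z,t` one has
`d(x,y) + d(z,t) ≤ max (d(x,z) + d(y,t)) (d(x,t) + d(y,z)) + 2δ`. -/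
def IsHyperbolicSpace (X : Type*) [MetricSpace X] (δ : ℝ) : Prop :=
  ∀ x y z t : X, dist x y + dist z t ≤
    max (dist x z + dist y t) (dist x t + dist y z) + 2 * δ

/-- Case (b) estimate in the proof of contractibility: if `w` satisfies
`d(w,y₀) ≤ d/2 + 2δ + 1` and `d(w,x₀) ≤ d(x₀,y₀)`, and `y₀'` lies on a geodesic from
`x₀` to `y₀` at distance `⌊d/4⌋` from `y₀`, then `d(w,y₀') ≤ d/2`. -/
theorem small_orbit_close_to_moved_point
    {X : Type*} [MetricSpace X] (δ : ℝ) (hδ : 0 ≤ δ)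
    (hhyp : IsHyperbolicSpace X δ) (d : ℕ) (hd : (d : ℝ) ≥ 32 * δ + 20)
    (w x₀ y₀ y₀' : X)
    (h1 : dist w y₀ ≤ (d : ℝ) / 2 + 2 * δ + 1)
    (h2 : dist w x₀ ≤ dist x₀ y₀)
    (h3 : dist x₀ y₀' + dist y₀' y₀ = dist x₀ y₀)
    (h4 : dist y₀' y₀ = (d / 4 : ℕ)) :
    dist w y₀' ≤ (d : ℝ) / 2 := by
  have h := Nat.div_add_mod d 4
  have hm : d % 4 ≤ 3 := by omega
  have hcast : 4 * ((d / 4 : ℕ) : ℝ) + ((d % 4 : ℕ) : ℝ) = (d : ℝ) := by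
    exact_mod_cast congrArg (Nat.cast : ℕ → ℝ) h
  have hm' : ((d % 4 : ℕ) : ℝ) ≤ 3 := by exact_mod_cast hm
  have hm0 : (0 : ℝ) ≤ ((d % 4 : ℕ) : ℝ) := by positivity
  have hq1 : ((d / 4 : ℕ) : ℝ) ≥ (d : ℝ) / 4 - 3 / 4 := by linarith
  have hq2 : ((d / 4 : ℕ) : ℝ) ≤ (d : ℝ) / 4 := by linarith
  have H := hhyp w y₀' x₀ y₀
  rw [dist_comm y₀' x₀] at H
  rcases le_total (dist w x₀ + dist y₀' y₀) (dist w y₀ + dist x₀ y₀') with hc | hc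
  · rw [max_eq_right hc] at H
    -- dist w y₀' ≤ dist w y₀ + dist x₀ y₀' - dist x₀ y₀ + 2δ = dist w y₀ - dist y₀' y₀ + 2δ
    rw [h4] at h3
    linarith
  · rw [max_eq_left hc] at H
    rw [h4] at H
    linarith
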